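/- Let m : ℝⁿ → ℝ be continuous and strictly positive, and suppose that near ξ = 0 one has |m(ξ) - m(0)| ≤ m₂|ξ|^σ for some constants m₂ > 0 and σ > 0. Then for any s ∈ ℝ there exist R > 0, C > 0, λ > 0 such that for all |ξ| ≤ R and all t ≥ 0, |exp(-|ξ|² t / m(ξ)^s) - exp(-|ξ|² t / m(0)^s)| ≤ C |ξ|^σ exp(-λ |ξ|² t). -/
import Mathlib


open Real

private lemma exp_aux (u v : ℝ) (h : u ≤ v) :
    |Real.exp (-u) - Real.exp (-v)| ≤ (v - u) * Real.exp (-u) := by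
  have h2 : Real.exp (-v) = Real.exp (-u) * Real.exp (u - v) := by
    rw [← Real.exp_add]; ring_nf
  have h3 := Real.add_one_le_exp (u - v)
  have h4 : Real.exp (-v) ≤ Real.exp (-u) := Real.exp_le_exp.mpr (by linarith)
  rw [abs_of_nonneg (by linarith)]
  nlinarith [Real.exp_pos (-u)]

private lemma exp_abs_aux (u v : ℝ) :
    |Real.exp (-u) - Real.exp (-v)| ≤ |u - v| * Real.exp (-(min u v)) := by
  rcases le_total u v with h | h
  · rw [min_eq_left h]
    calc |Real.exp (-u) - Real.exp (-v)| ≤ (v - u) * Real.exp (-u) := exp_aux u v h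
      _ = |u - v| * Real.exp (-u) := by
          rw [abs_sub_comm, abs_of_nonneg (by linarith : (0:ℝ) ≤ v - u)]
  · rw [min_eq_right h, abs_sub_comm]
    calc |Real.exp (-v) - Real.exp (-u)| ≤ (u - v) * Real.exp (-v) := exp_aux v u h
      _ = |u - v| * Real.exp (-v) := by
          rw [abs_of_nonneg (by linarith : (0:ℝ) ≤ u - v)]

/-- Comparison of the symbol exponentials near zero frequency under assumption (M₂). -/
theorem stmt_1 (n : ℕ) (hn : 1 ≤ n) (m : EuclideanSpace ℝ (Fin n) → ℝ)
    (hm : Continuous m) (hpos : ∀ ξ, 0 < m ξ) (m₂ σ : ℝ) (hm₂ : 0 < m₂) (hσ : 0 < σ)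
    (hnear : ∃ ε > 0, ∀ ξ : EuclideanSpace ℝ (Fin n), ‖ξ‖ ≤ ε → |m ξ - m 0| ≤ m₂ * ‖ξ‖ ^ σ)
    (s : ℝ) :
    ∃ R > 0, ∃ C > 0, ∃ lam > 0, ∀ ξ : EuclideanSpace ℝ (Fin n), ∀ t : ℝ,
      ‖ξ‖ ≤ R → 0 ≤ t →
      |Real.exp (-(‖ξ‖ ^ 2 * t) / (m ξ) ^ s) - Real.exp (-(‖ξ‖ ^ 2 * t) / (m 0) ^ s)| ≤
        C * ‖ξ‖ ^ σ * Real.exp (-(lam * ‖ξ‖ ^ 2 * t)) := by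
  obtain ⟨ε, hε, hnear⟩ := hnear
  have hm0 : 0 < m 0 := hpos 0
  -- continuity at 0: find δ with |m ξ - m 0| < m 0 / 2 for ‖ξ‖ < δ
  obtain ⟨δ, hδ, hδball⟩ := Metric.continuousAt_iff.mp (hm.continuousAt (x := 0)) (m 0 / 2)
    (by positivity)
  set c : ℝ := m 0 / 2 with hc_def
  set d : ℝ := 2 * m 0 with hd_def
  have hc : 0 < c := by positivity
  have hd : 0 < d := by positivity
  set R : ℝ := min ε (δ / 2) with hR_def
  have hR : 0 < R := lt_min hε (by positivity)
  -- bounds on m ξ on the ball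
  have hball : ∀ ξ : EuclideanSpace ℝ (Fin n), ‖ξ‖ ≤ R → c ≤ m ξ ∧ m ξ ≤ d := by
    intro ξ hξ
    have h1 : dist ξ 0 < δ := by
      rw [dist_zero_right]
      calc ‖ξ‖ ≤ R := hξ
        _ ≤ δ / 2 := min_le_right _ _
        _ < δ := by linarith
    have h2 := hδball h1
    rw [Real.dist_eq] at h2
    rw [abs_lt] at h2
    constructor <;> [skip; skip] <;> simp only [hc_def, hd_def] <;> linarith [h2.1, h2.2]
  -- the function y ↦ y ^ (-s) and its derivative bound on [c, d]
  set K : ℝ := |s| * max (c ^ (-s - 1)) (d ^ (-s - 1)) with hK_def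
  have hKnonneg : 0 ≤ K := by
    apply mul_nonneg (abs_nonneg s)
    exact le_trans (Real.rpow_nonneg hc.le _) (le_max_left _ _)
  have hlip : ∀ y ∈ Set.Icc c d, ∀ z ∈ Set.Icc c d,
      |y ^ (-s) - z ^ (-s)| ≤ K * |y - z| := by
    intro y hy z hz
    have hderiv : ∀ x ∈ Set.Icc c d,
        HasDerivWithinAt (fun x : ℝ => x ^ (-s)) ((-s) * x ^ (-s - 1)) (Set.Icc c d) x := by
      intro x hx
      exact (Real.hasDerivAt_rpow_const (Or.inl (ne_of_gt (lt_of_lt_of_le hc hx.1)))).hasDerivWithinAt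
    have hbound : ∀ x ∈ Set.Icc c d, ‖(-s) * x ^ (-s - 1)‖ ≤ K := by
      intro x hx
      have hx0 : 0 < x := lt_of_lt_of_le hc hx.1
      rw [norm_mul, norm_neg, Real.norm_eq_abs, Real.norm_eq_abs,
        abs_of_nonneg (Real.rpow_nonneg hx0.le _)]
      rw [hK_def]
      apply mul_le_mul_of_nonneg_left _ (abs_nonneg s)
      rcases le_or_gt 0 (-s - 1) with he | he
      · exact le_trans (Real.rpow_le_rpow hx0.le hx.2 he) (le_max_right _ _)
      · exact le_trans (Real.rpow_le_rpow_of_nonpos hc hx.1 he.le) (le_max_left _ _)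
    have := (convex_Icc c d).norm_image_sub_le_of_norm_hasDerivWithin_le hderiv hbound hy hz
    simpa [Real.norm_eq_abs, abs_sub_comm] using this
  -- lower bound for y ^ (-s) on [c, d]
  set μ : ℝ := min (c ^ (-s)) (d ^ (-s)) with hμ_def
  have hμ : 0 < μ := lt_min (Real.rpow_pos_of_pos hc _) (Real.rpow_pos_of_pos hd _)
  have hlow : ∀ y ∈ Set.Icc c d, μ ≤ y ^ (-s) := by
    intro y hy
    have hy0 : 0 < y := lt_of_lt_of_le hc hy.1
    rcases le_or_gt 0 (-s) with he | he
    · exact le_trans (min_le_left _ _) (Real.rpow_le_rpow hc.le hy.1 he)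
    · exact le_trans (min_le_right _ _) (Real.rpow_le_rpow_of_nonpos hy0 hy.2 he.le)
  refine ⟨R, hR, 2 * (K + 1) * m₂ / μ, by positivity, μ / 2, by positivity, ?_⟩
  intro ξ t hξR ht
  have hmem : m ξ ∈ Set.Icc c d := ⟨(hball ξ hξR).1, (hball ξ hξR).2⟩
  have hmem0 : m 0 ∈ Set.Icc c d := ⟨by simp [hc_def]; linarith, by simp [hd_def]; linarith⟩
  set x : ℝ := ‖ξ‖ ^ 2 * t with hx_def
  have hx0 : 0 ≤ x := by positivity
  have hmξ : 0 < m ξ := hpos ξ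
  -- rewrite the exponents
  have hrw : ∀ y : ℝ, 0 < y → -(x) / y ^ s = -(x * y ^ (-s)) := by
    intro y hy
    rw [Real.rpow_neg hy.le]
    field_simp
  set u : ℝ := x * (m ξ) ^ (-s) with hu_def
  set v : ℝ := x * (m 0) ^ (-s) with hv_def
  have hu0 : 0 ≤ u := mul_nonneg hx0 (Real.rpow_nonneg hmξ.le _)
  have hv0 : 0 ≤ v := mul_nonneg hx0 (Real.rpow_nonneg hm0.le _)
  have hkey : |Real.exp (-u) - Real.exp (-v)| ≤ |u - v| * Real.exp (-(min u v)) :=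
    exp_abs_aux u v
  have huv : |u - v| ≤ x * (K * (m₂ * ‖ξ‖ ^ σ)) := by
    have h1 : |u - v| = x * |(m ξ) ^ (-s) - (m 0) ^ (-s)| := by
      rw [hu_def, hv_def, ← mul_sub, abs_mul, abs_of_nonneg hx0]
    rw [h1]
    apply mul_le_mul_of_nonneg_left _ hx0
    calc |(m ξ) ^ (-s) - (m 0) ^ (-s)| ≤ K * |m ξ - m 0| := hlip _ hmem _ hmem0
      _ ≤ K * (m₂ * ‖ξ‖ ^ σ) := by
          apply mul_le_mul_of_nonneg_left _ hKnonneg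
          exact hnear ξ (le_trans hξR (min_le_left _ _))
  have hmin : μ * x ≤ min u v := by
    apply le_min
    · rw [hu_def, mul_comm μ x]
      exact mul_le_mul_of_nonneg_left (hlow _ hmem) hx0
    · rw [hv_def, mul_comm μ x]
      exact mul_le_mul_of_nonneg_left (hlow _ hmem0) hx0
  have hexpmin : Real.exp (-(min u v)) ≤ Real.exp (-(μ * x)) :=
    Real.exp_le_exp.mpr (by linarith)
  -- x * exp(-μ x) ≤ (2/μ) * exp(-(μ/2) x)
  have hxexp : x * Real.exp (-(μ * x)) ≤ (2 / μ) * Real.exp (-(μ / 2 * x)) := by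
    have h1 : μ / 2 * x ≤ Real.exp (μ / 2 * x) := by
      have := Real.add_one_le_exp (μ / 2 * x)
      linarith
    have h2 : x ≤ (2 / μ) * Real.exp (μ / 2 * x) := by
      calc x = (2 / μ) * (μ / 2 * x) := by field_simp
        _ ≤ (2 / μ) * Real.exp (μ / 2 * x) := by
            apply mul_le_mul_of_nonneg_left h1 (by positivity)
    calc x * Real.exp (-(μ * x)) ≤ ((2 / μ) * Real.exp (μ / 2 * x)) * Real.exp (-(μ * x)) :=
          mul_le_mul_of_nonneg_right h2 (Real.exp_pos _).le
      _ = (2 / μ) * Real.exp (-(μ / 2 * x)) := by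
          rw [mul_assoc, ← Real.exp_add]; ring_nf
  -- put it together
  have hA : (0:ℝ) ≤ ‖ξ‖ ^ σ := Real.rpow_nonneg (norm_nonneg _) _
  have hgoal_lhs : |Real.exp (-(‖ξ‖ ^ 2 * t) / (m ξ) ^ s) - Real.exp (-(‖ξ‖ ^ 2 * t) / (m 0) ^ s)|
      = |Real.exp (-u) - Real.exp (-v)| := by
    rw [hrw _ hmξ, hrw _ hm0]
  rw [hgoal_lhs]
  calc |Real.exp (-u) - Real.exp (-v)| ≤ |u - v| * Real.exp (-(min u v)) := hkey
    _ ≤ (x * (K * (m₂ * ‖ξ‖ ^ σ))) * Real.exp (-(μ * x)) := by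
        apply mul_le_mul huv hexpmin (Real.exp_pos _).le
        positivity
    _ = (K * (m₂ * ‖ξ‖ ^ σ)) * (x * Real.exp (-(μ * x))) := by ring
    _ ≤ (K * (m₂ * ‖ξ‖ ^ σ)) * ((2 / μ) * Real.exp (-(μ / 2 * x))) := by
        apply mul_le_mul_of_nonneg_left hxexp
        positivity
    _ ≤ 2 * (K + 1) * m₂ / μ * ‖ξ‖ ^ σ * Real.exp (-(μ / 2 * ‖ξ‖ ^ 2 * t)) := by
        rw [hx_def]
        have h := Real.exp_pos (-(μ / 2 * (‖ξ‖ ^ 2 * t)))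
        have heq : -(μ / 2 * (‖ξ‖ ^ 2 * t)) = -(μ / 2 * ‖ξ‖ ^ 2 * t) := by ring
        rw [heq] at h ⊢
        have : K * (m₂ * ‖ξ‖ ^ σ) * (2 / μ) ≤ 2 * (K + 1) * m₂ / μ * ‖ξ‖ ^ σ := by
          rw [show K * (m₂ * ‖ξ‖ ^ σ) * (2 / μ) = 2 * K * m₂ * ‖ξ‖ ^ σ / μ by ring,
            show 2 * (K + 1) * m₂ / μ * ‖ξ‖ ^ σ = 2 * (K + 1) * m₂ * ‖ξ‖ ^ σ / μ by ring]
          gcongr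
          linarith
        calc K * (m₂ * ‖ξ‖ ^ σ) * ((2 / μ) * Real.exp (-(μ / 2 * ‖ξ‖ ^ 2 * t)))
            = (K * (m₂ * ‖ξ‖ ^ σ) * (2 / μ)) * Real.exp (-(μ / 2 * ‖ξ‖ ^ 2 * t)) := by ring
          _ ≤ 2 * (K + 1) * m₂ / μ * ‖ξ‖ ^ σ * Real.exp (-(μ / 2 * ‖ξ‖ ^ 2 * t)) :=
              mul_le_mul_of_nonneg_right this h.le
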